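/- arXiv:1411.5184 — 2 statements merged into one kernel-verified Lean document; each statement's English description precedes it below -/
import Mathlib

section
/- Let G be a finite connected simple graph without isolated vertices and let V_purple, V_blue be disjoint sets of vertices with V_purple ∪ V_blue ≠ ∅, such that no vertex x of G satisfies N[x] ⊆ V_purple or N[x] ⊆ V_blue, and such that some vertex v and some color c ∈ {purple, blue} satisfy N[v] ∩ V_c = ∅ (not every vertex is dominated in both colors). Then there exist a vertex u ∉ V_purple ∪ V_blue and a color c' ∈ {purple, blue} such that some w ∈ N[u] satisfies N[w] ∩ V_{c'} = ∅ (coloring u with c' is a legal move of the Disjoint Domination Game) and u has a neighbor lying in the color class complementary to c'. -/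
namespace DDG

variable {V : Type*}

/-- The closed neighborhood `N[v]` of a vertex `v`. -/
def closedNbhd (G : SimpleGraph V) (v : V) : Set V := insert v (G.neighborSet v)

/-- `D` is a dominating set of `G`: every vertex has a member of `D`
in its closed neighborhood. -/
def Dominates (G : SimpleGraph V) (D : Set V) : Prop :=
  ∀ v : V, (closedNbhd G v ∩ D).Nonempty

/-- A position of the game: the sets of purple and blue vertices. -/
structure Pos (V : Type*) where
  purple : Set V
  blue : Set V

namespace Pos

/-- The vertex class of a color (`true` = purple, `false` = blue). -/
def colorSet (p : Pos V) (c : Bool) : Set V := if c then p.purple else p.blue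

/-- The position obtained by coloring vertex `v` with color `c`. -/
def play (p : Pos V) (v : V) (c : Bool) : Pos V :=
  if c then ⟨insert v p.purple, p.blue⟩ else ⟨p.purple, insert v p.blue⟩

end Pos

/-- A legal move of the Disjoint Domination Game: select an uncolored vertex `v`
and a color `c` such that some `u ∈ N[v]` is not yet dominated in color `c`. -/
def LegalMove (G : SimpleGraph V) (p : Pos V) (v : V) (c : Bool) : Prop :=
  v ∉ p.purple ∪ p.blue ∧ ∃ u ∈ closedNbhd G v, closedNbhd G u ∩ p.colorSet c = ∅

/-- End condition ⟨s⟩: some closed neighborhood is monochromatic; Sepy wins. -/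
def SepyEnd (G : SimpleGraph V) (p : Pos V) : Prop :=
  ∃ v : V, closedNbhd G v ⊆ p.purple ∨ closedNbhd G v ⊆ p.blue

/-- End condition ⟨d⟩: both color classes are dominating sets; Dom wins. -/
def DomEnd (G : SimpleGraph V) (p : Pos V) : Prop :=
  Dominates G p.purple ∧ Dominates G p.blue

/-- `DomWins G turn p` : Dom has a winning strategy in the Disjoint Domination Game
from position `p`, where `turn = true` iff it is Dom's move. -/
inductive DomWins (G : SimpleGraph V) : Bool → Pos V → Prop
  | terminal (turn : Bool) (p : Pos V) :
      ¬ SepyEnd G p → DomEnd G p → DomWins G turn p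
  | domStep (p : Pos V) (v : V) (c : Bool) :
      ¬ SepyEnd G p → ¬ DomEnd G p → LegalMove G p v c →
      DomWins G false (p.play v c) → DomWins G true p
  | sepyStep (p : Pos V) :
      ¬ SepyEnd G p → ¬ DomEnd G p →
      (∃ v c, LegalMove G p v c) →
      (∀ v c, LegalMove G p v c → DomWins G true (p.play v c)) →
      DomWins G false p

/-- `SepyWins G turn p` : Sepy has a winning strategy in the Disjoint Domination Game
from position `p`, where `turn = true` iff it is Dom's move. -/
inductive SepyWins (G : SimpleGraph V) : Bool → Pos V → Prop
  | terminal (turn : Bool) (p : Pos V) : SepyEnd G p → SepyWins G turn p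
  | sepyStep (p : Pos V) (v : V) (c : Bool) :
      ¬ SepyEnd G p → ¬ DomEnd G p → LegalMove G p v c →
      SepyWins G true (p.play v c) → SepyWins G false p
  | domStep (p : Pos V) :
      ¬ SepyEnd G p → ¬ DomEnd G p →
      (∃ v c, LegalMove G p v c) →
      (∀ v c, LegalMove G p v c → SepyWins G false (p.play v c)) →
      SepyWins G true p

end DDG



namespace DDG

lemma self_mem_closedNbhd (G : SimpleGraph V) (v : V) : v ∈ closedNbhd G v :=
  Set.mem_insert _ _

lemma mem_closedNbhd {G : SimpleGraph V} {u v : V} :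
    u ∈ closedNbhd G v ↔ u = v ∨ G.Adj v u := by
  simp [closedNbhd]

lemma walkLemma (G : SimpleGraph V) (S : Set V) :
    ∀ {v z : V}, G.Walk v z → z ∈ S → closedNbhd G v ∩ S = ∅ →
      ∃ u y, u ∉ S ∧ G.Adj u y ∧ y ∈ S ∧
        ∃ w ∈ closedNbhd G u, closedNbhd G w ∩ S = ∅ := by
  intro v z p
  induction p with
  | nil =>
      intro hz hv
      exact (Set.eq_empty_iff_forall_notMem.mp hv _
        ⟨self_mem_closedNbhd G _, hz⟩).elim
  | @cons a b z hab q ih =>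
      intro hz hv
      have hmem : ∀ x ∈ closedNbhd G a, x ∉ S := fun x hx hxS =>
        Set.eq_empty_iff_forall_notMem.mp hv x ⟨hx, hxS⟩
      by_cases hS : closedNbhd G b ∩ S = ∅
      · exact ih hz hS
      · obtain ⟨y, hy1, hy2⟩ := Set.nonempty_iff_ne_empty.mpr hS
        have hbS : b ∉ S := hmem b (mem_closedNbhd.mpr (Or.inr hab))
        have hyb : y ≠ b := fun h => hbS (h ▸ hy2)
        have hadj : G.Adj b y := by
          rcases mem_closedNbhd.mp hy1 with h | h
          · exact absurd h hyb
          · exact h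
        exact ⟨b, y, hbS, hadj, hy2,
          a, mem_closedNbhd.mpr (Or.inr hab.symm), hv⟩

lemma mainLemma (G : SimpleGraph V) (hc : G.Connected) (A B : Set V)
    (hA : ∀ x : V, ¬ closedNbhd G x ⊆ A) (hB : ∀ x : V, ¬ closedNbhd G x ⊆ B)
    (hne : (A ∪ B).Nonempty) (v : V) (hv : closedNbhd G v ∩ A = ∅) :
    (∃ u, u ∉ A ∪ B ∧ (∃ w ∈ closedNbhd G u, closedNbhd G w ∩ A = ∅) ∧
        ∃ y, G.Adj u y ∧ y ∈ B) ∨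
    (∃ u, u ∉ A ∪ B ∧ (∃ w ∈ closedNbhd G u, closedNbhd G w ∩ B = ∅) ∧
        ∃ y, G.Adj u y ∧ y ∈ A) := by
  have hNA : ∀ x ∈ closedNbhd G v, x ∉ A := fun x hx hxA =>
    Set.eq_empty_iff_forall_notMem.mp hv x ⟨hx, hxA⟩
  have hvA : v ∉ A := hNA v (self_mem_closedNbhd G v)
  by_cases hvB : v ∈ B
  · -- find y ∈ N[v] \ B
    obtain ⟨y, hy1, hy2⟩ := Set.not_subset.mp (hB v)
    have hyv : y ≠ v := fun h => hy2 (h ▸ hvB)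
    have hadj : G.Adj v y := by
      rcases mem_closedNbhd.mp hy1 with h | h
      · exact absurd h hyv
      · exact h
    have hyA : y ∉ A := hNA y hy1
    exact Or.inl ⟨y, fun h => h.elim hyA hy2,
      ⟨v, mem_closedNbhd.mpr (Or.inr hadj.symm), hv⟩, v, hadj.symm, hvB⟩
  · by_cases hNB : ∃ b ∈ closedNbhd G v, b ∈ B
    · obtain ⟨b, hb1, hb2⟩ := hNB
      have hbv : b ≠ v := fun h => hvB (h ▸ hb2)
      have hadj : G.Adj v b := by
        rcases mem_closedNbhd.mp hb1 with h | h
        · exact absurd h hbv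
        · exact h
      exact Or.inl ⟨v, fun h => h.elim hvA hvB,
        ⟨v, self_mem_closedNbhd G v, hv⟩, b, hadj, hb2⟩
    · push_neg at hNB
      have hvS : closedNbhd G v ∩ (A ∪ B) = ∅ := by
        apply Set.eq_empty_iff_forall_notMem.mpr
        rintro x ⟨hx, hxAB | hxAB⟩
        · exact hNA x hx hxAB
        · exact hNB x hx hxAB
      obtain ⟨z, hz⟩ := hne
      obtain ⟨p⟩ := hc.preconnected v z
      obtain ⟨u, y, hu, hadj, hy, w, hw1, hw2⟩ := walkLemma G (A ∪ B) p hz hvS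
      have hwA : closedNbhd G w ∩ A = ∅ := by
        apply Set.eq_empty_iff_forall_notMem.mpr
        rintro x ⟨hx1, hx2⟩
        exact Set.eq_empty_iff_forall_notMem.mp hw2 x ⟨hx1, Or.inl hx2⟩
      have hwB : closedNbhd G w ∩ B = ∅ := by
        apply Set.eq_empty_iff_forall_notMem.mpr
        rintro x ⟨hx1, hx2⟩
        exact Set.eq_empty_iff_forall_notMem.mp hw2 x ⟨hx1, Or.inr hx2⟩
      rcases hy with hyA | hyB
      · exact Or.inr ⟨u, hu, ⟨w, hw1, hwB⟩, y, hadj, hyA⟩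
      · exact Or.inl ⟨u, hu, ⟨w, hw1, hwA⟩, y, hadj, hyB⟩

end DDG

open DDG


/-- Lemma 5 of the paper: in a position of the Disjoint Domination
Game on a finite connected isolate-free graph in which at least one vertex is colored,
no closed neighborhood is monochromatic, and some vertex is undominated in some color,
there is a legal move coloring a vertex `u` with a color `c'` such that `u` has a
neighbor in the class of the complementary color. -/
theorem statement4 {V : Type*} [Fintype V] (G : SimpleGraph V)
    (hconn : G.Connected) (hiso : ∀ v : V, ∃ u : V, G.Adj v u)
    (Vp Vb : Set V) (hdisj : Disjoint Vp Vb)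
    (hne : (Vp ∪ Vb).Nonempty)
    (hmono : ¬ SepyEnd G ⟨Vp, Vb⟩)
    (hund : ∃ (v : V) (c : Bool), closedNbhd G v ∩ (Pos.mk Vp Vb).colorSet c = ∅) :
    ∃ (u : V) (c' : Bool), LegalMove G ⟨Vp, Vb⟩ u c' ∧
      ∃ w : V, G.Adj u w ∧ w ∈ (Pos.mk Vp Vb).colorSet (!c') := by
  obtain ⟨v, c, hund⟩ := hund
  have hmono' : ∀ x : V, ¬ closedNbhd G x ⊆ Vp ∧ ¬ closedNbhd G x ⊆ Vb := by
    intro x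
    constructor <;> intro h <;> exact hmono ⟨x, by simp [h]⟩
  have hA : ∀ x : V, ¬ closedNbhd G x ⊆ Vp := fun x => (hmono' x).1
  have hB : ∀ x : V, ¬ closedNbhd G x ⊆ Vb := fun x => (hmono' x).2
  cases c with
  | true =>
      have hund' : closedNbhd G v ∩ Vp = ∅ := by simpa [Pos.colorSet] using hund
      rcases mainLemma G hconn Vp Vb hA hB hne v hund' with
        ⟨u, hu, ⟨w, hw1, hw2⟩, y, hadj, hy⟩ | ⟨u, hu, ⟨w, hw1, hw2⟩, y, hadj, hy⟩
      · exact ⟨u, true, ⟨hu, w, hw1, by simpa [Pos.colorSet] using hw2⟩,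
          y, hadj, by simpa [Pos.colorSet] using hy⟩
      · exact ⟨u, false, ⟨hu, w, hw1, by simpa [Pos.colorSet] using hw2⟩,
          y, hadj, by simpa [Pos.colorSet] using hy⟩
  | false =>
      have hund' : closedNbhd G v ∩ Vb = ∅ := by simpa [Pos.colorSet] using hund
      have hne' : (Vb ∪ Vp).Nonempty := by rwa [Set.union_comm]
      rcases mainLemma G hconn Vb Vp hB hA hne' v hund' with
        ⟨u, hu, ⟨w, hw1, hw2⟩, y, hadj, hy⟩ | ⟨u, hu, ⟨w, hw1, hw2⟩, y, hadj, hy⟩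
      · have hu' : u ∉ Vp ∪ Vb := by rwa [Set.union_comm]
        exact ⟨u, false, ⟨hu', w, hw1, by simpa [Pos.colorSet] using hw2⟩,
          y, hadj, by simpa [Pos.colorSet] using hy⟩
      · have hu' : u ∉ Vp ∪ Vb := by rwa [Set.union_comm]
        exact ⟨u, true, ⟨hu', w, hw1, by simpa [Pos.colorSet] using hw2⟩,
          y, hadj, by simpa [Pos.colorSet] using hy⟩
end

section
/- For every n ≥ 8, Sepy has a winning strategy in the Dom-start Disjoint Domination Game on the cycle C_n. -/
open DDG

namespace DDG

variable {V : Type*} {G : SimpleGraph V}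

namespace Pos

variable (p : Pos V) (v : V) (c d : Bool)

@[simp]
lemma colorSet_play_self : (p.play v c).colorSet c = insert v (p.colorSet c) := by
  cases c <;> rfl

@[simp]
lemma colorSet_play_not : (p.play v c).colorSet (!c) = p.colorSet (!c) := by
  cases c <;> rfl

@[simp]
lemma colorSet_empty : (⟨∅, ∅⟩ : Pos V).colorSet c = ∅ := by
  cases c <;> rfl

lemma colorSet_play_subset : (p.play v d).colorSet c ⊆ insert v (p.colorSet c) := by
  cases c <;> cases d <;> simp [play, colorSet, Set.subset_insert]

lemma colorSet_subset_play : p.colorSet c ⊆ (p.play v d).colorSet c := by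
  cases c <;> cases d <;> simp [play, colorSet, Set.subset_insert]

lemma union_eq_colorSet_union : p.purple ∪ p.blue = p.colorSet c ∪ p.colorSet (!c) := by
  cases c
  · exact Set.union_comm _ _
  · rfl

end Pos

lemma sepyEnd_iff {p : Pos V} : SepyEnd G p ↔ ∃ u c, closedNbhd G u ⊆ p.colorSet c := by
  simp [SepyEnd, Pos.colorSet, or_comm]

lemma mem_closedNbhd_self (v : V) : v ∈ closedNbhd G v := Set.mem_insert v _

lemma not_sepyEnd_of_forall_exists_uncolored {p : Pos V}
    (h : ∀ u ∈ p.purple ∪ p.blue, ∃ w ∈ closedNbhd G u, w ∉ p.purple ∪ p.blue) :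
    ¬ SepyEnd G p := by
  rintro ⟨u, hu⟩
  replace hu : closedNbhd G u ⊆ p.purple ∪ p.blue :=
    hu.elim (·.trans Set.subset_union_left) (·.trans Set.subset_union_right)
  obtain ⟨w, hw, hw'⟩ := h u (hu (mem_closedNbhd_self u))
  exact hw' (hu hw)

lemma Dominates.mono {D D' : Set V} (hD : Dominates G D) (h : D ⊆ D') : Dominates G D' :=
  fun v => (hD v).mono (Set.inter_subset_inter_right _ h)

lemma not_domEnd_of_not_dominates {p : Pos V} (c : Bool) (h : ¬ Dominates G (p.colorSet c)) :
    ¬ DomEnd G p := by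
  rintro ⟨hp, hb⟩
  cases c <;> contradiction

lemma SepyWins.of_completing_move {p : Pos V} {u w t : V} {c : Bool}
    (hS : ¬ SepyEnd G p) (hD : ¬ DomEnd G p) (hw : w ∉ p.purple ∪ p.blue)
    (hu : u ∈ closedNbhd G w) (hfree : closedNbhd G u ∩ p.colorSet c = ∅)
    (ht : closedNbhd G t ⊆ insert w (p.colorSet c)) : SepyWins G false p :=
  .sepyStep p w c hS hD ⟨hw, u, hu, hfree⟩ <| .terminal _ _ <|
    sepyEnd_iff.2 ⟨t, c, by rwa [Pos.colorSet_play_self]⟩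

section Path

variable {x : ℕ → V}

lemma not_dominates_singleton_of_path (hx : Set.InjOn x (Set.Iio 8))
    (hN : ∀ k < 6, closedNbhd G (x (k + 1)) = {x k, x (k + 1), x (k + 2)}) (y : V) :
    ¬ Dominates G {y} := by
  intro hD
  obtain ⟨_, hy₁, rfl⟩ := hD (x 1)
  obtain ⟨_, hy₆, hy⟩ := hD (x 6)
  rw [Set.mem_singleton_iff.1 hy] at hy₆
  rw [show closedNbhd G (x 1) = {x 0, x 1, x 2} from hN 0 (by norm_num)] at hy₁
  rw [show closedNbhd G (x 6) = {x 5, x 6, x 7} from hN 5 (by norm_num)] at hy₆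
  simp only [Set.mem_insert_iff, Set.mem_singleton_iff] at hy₁ hy₆
  rcases hy₁ with rfl | rfl | rfl <;> simp [hx.eq_iff] at hy₆

lemma sepyWins_of_double_threat (hx : Set.InjOn x (Set.Iio 8))
    (hN : ∀ k < 6, closedNbhd G (x (k + 1)) = {x k, x (k + 1), x (k + 2)})
    {p : Pos V} {c : Bool} {v : V} (hc : p.colorSet c ⊆ {v, x 4, x 3})
    (hc' : {x 3, x 4} ⊆ p.colorSet c) (hnc : p.colorSet (!c) ⊆ {v}) :
    SepyWins G false p := by
  by_cases hS : SepyEnd G p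
  · exact .terminal _ _ hS
  have hD : ¬ DomEnd G p := not_domEnd_of_not_dominates (!c) fun h =>
    not_dominates_singleton_of_path hx hN v (h.mono hnc)
  have hcol : p.purple ∪ p.blue ⊆ {v, x 4, x 3} := by
    rw [p.union_eq_colorSet_union c]
    exact Set.union_subset hc (hnc.trans (by simp))
  have hN₁ : closedNbhd G (x 1) = {x 0, x 1, x 2} := hN 0 (by norm_num)
  have hN₂ : closedNbhd G (x 2) = {x 1, x 2, x 3} := hN 1 (by norm_num)
  have hN₃ : closedNbhd G (x 3) = {x 2, x 3, x 4} := hN 2 (by norm_num)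
  have hN₄ : closedNbhd G (x 4) = {x 3, x 4, x 5} := hN 3 (by norm_num)
  have hN₅ : closedNbhd G (x 5) = {x 4, x 5, x 6} := hN 4 (by norm_num)
  have hN₆ : closedNbhd G (x 6) = {x 5, x 6, x 7} := hN 5 (by norm_num)
  by_cases hv : v = x 5 ∨ v = x 6 ∨ v = x 7
  · refine .of_completing_move (u := x 1) (w := x 2) (t := x 3) hS hD ?_ (by simp [hN₂]) ?_
      (by rw [hN₃]; exact Set.insert_subset_insert hc')
    · rcases hv with rfl | rfl | rfl <;> exact fun h => by simpa [hx.eq_iff] using hcol h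
    · rw [hN₁, ← Set.disjoint_iff_inter_eq_empty]
      refine Set.disjoint_of_subset_right hc ?_
      rcases hv with rfl | rfl | rfl <;> simp [hx.eq_iff]
  · obtain ⟨hv₅, hv₆, hv₇⟩ : v ≠ x 5 ∧ v ≠ x 6 ∧ v ≠ x 7 := by tauto
    refine .of_completing_move (c := c) (u := x 6) (w := x 5) (t := x 4) hS hD ?_
      (by simp [hN₅]) ?_ ?_
    · exact fun h => by simpa [hx.eq_iff, hv₅.symm] using hcol h
    · rw [hN₆, ← Set.disjoint_iff_inter_eq_empty]
      refine Set.disjoint_of_subset_right hc ?_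
      simp [hx.eq_iff, hv₅, hv₆, hv₇]
    · simp [hN₄, Set.insert_subset_iff, Set.pair_subset_iff.1 hc']

lemma sepyWins_of_threat (hx : Set.InjOn x (Set.Iio 8))
    (hN : ∀ k < 6, closedNbhd G (x (k + 1)) = {x k, x (k + 1), x (k + 2)})
    {p : Pos V} {c : Bool} (hc : p.colorSet c = {x 4, x 3}) (hnc : p.colorSet (!c) = ∅) :
    SepyWins G true p := by
  have hcol : p.purple ∪ p.blue = {x 4, x 3} := by simp [p.union_eq_colorSet_union c, hc, hnc]
  have hN₃ : closedNbhd G (x 3) = {x 2, x 3, x 4} := hN 2 (by norm_num)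
  have hN₄ : closedNbhd G (x 4) = {x 3, x 4, x 5} := hN 3 (by norm_num)
  have hS : ¬ SepyEnd G p := by
    refine not_sepyEnd_of_forall_exists_uncolored ?_
    rw [hcol]
    rintro u (rfl | rfl)
    · exact ⟨x 5, by simp [hN₄], by simp [hx.eq_iff]⟩
    · exact ⟨x 2, by simp [hN₃], by simp [hx.eq_iff]⟩
  have hD : ¬ DomEnd G p := not_domEnd_of_not_dominates (!c) fun h =>
    not_dominates_singleton_of_path hx hN (x 0) (h.mono (by simp [hnc]))
  refine .domStep p hS hD ⟨x 0, !c, ?_, x 0, mem_closedNbhd_self _, by simp [hnc]⟩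
    fun v d _ => sepyWins_of_double_threat hx hN (c := c) (v := v) ?_ ?_ ?_
  · simp [hcol, hx.eq_iff]
  · simpa [hc] using p.colorSet_play_subset v c d
  · rw [Set.pair_comm, ← hc]
    exact p.colorSet_subset_play v c d
  · simpa [hnc] using p.colorSet_play_subset v (!c) d

theorem sepyWins_play_of_path (hx : Set.InjOn x (Set.Iio 8))
    (hN : ∀ k < 6, closedNbhd G (x (k + 1)) = {x k, x (k + 1), x (k + 2)}) (c : Bool) :
    SepyWins G false ((⟨∅, ∅⟩ : Pos V).play (x 3) c) := by
  set p := (⟨∅, ∅⟩ : Pos V).play (x 3) c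
  have hc : p.colorSet c = {x 3} := by simp [p]
  have hnc : p.colorSet (!c) = ∅ := by simp [p]
  have hcol : p.purple ∪ p.blue = {x 3} := by simp [p.union_eq_colorSet_union c, hc, hnc]
  have hS : ¬ SepyEnd G p := by
    refine not_sepyEnd_of_forall_exists_uncolored ?_
    rw [hcol]
    rintro u rfl
    exact ⟨x 2, by simp [show closedNbhd G (x 3) = _ from hN 2 (by norm_num)],
      by simp [hx.eq_iff]⟩
  have hD : ¬ DomEnd G p := not_domEnd_of_not_dominates (!c) fun h =>
    not_dominates_singleton_of_path hx hN (x 0) (h.mono (by simp [hnc]))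
  have hlegal : LegalMove G p (x 4) c := by
    refine ⟨by simp [hcol, hx.eq_iff], x 5, ?_, ?_⟩
    · simp [show closedNbhd G (x 4) = _ from hN 3 (by norm_num)]
    · simp [show closedNbhd G (x 5) = _ from hN 4 (by norm_num), hc, hx.eq_iff]
  refine .sepyStep p (x 4) c hS hD hlegal (sepyWins_of_threat hx hN (c := c) ?_ ?_)
  · simp [hc]
  · simp [hnc]

end Path

section Cycle

open SimpleGraph
open scoped Fin.NatCast Fin.CommRing

variable {m : ℕ}

lemma closedNbhd_cycleGraph (v : Fin (m + 2)) :
    closedNbhd (cycleGraph (m + 2)) v = {v - 1, v, v + 1} := by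
  rw [closedNbhd, cycleGraph_neighborSet, Set.insert_comm]

lemma closedNbhd_cycleGraph_add_natCast (b : Fin (m + 2)) (k : ℕ) :
    closedNbhd (cycleGraph (m + 2)) (b + (k + 1 : ℕ)) =
      {b + (k : ℕ), b + (k + 1 : ℕ), b + (k + 2 : ℕ)} := by
  rw [closedNbhd_cycleGraph]
  congr 3 <;> push_cast <;> ring

lemma injOn_add_natCast (b : Fin (m + 2)) :
    Set.InjOn (fun k : ℕ => b + (k : Fin (m + 2))) (Set.Iio (m + 2)) := by
  intro i hi j hj h
  have h' := congrArg Fin.val (add_left_cancel h)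
  rwa [Fin.val_cast_of_lt hi, Fin.val_cast_of_lt hj] at h'

end Cycle

end DDG

open scoped Fin.NatCast Fin.CommRing in
/-- Proposition "cycle" of the paper: for every `n ≥ 8`, Sepy has a
winning strategy in the Dom-start Disjoint Domination Game on the cycle `C_n`. -/
theorem statement5 (n : ℕ) (hn : 8 ≤ n) :
    SepyWins (SimpleGraph.cycleGraph n) true ⟨∅, ∅⟩ := by
  obtain ⟨m, rfl⟩ : ∃ m, n = m + 2 := ⟨n - 2, by omega⟩
  refine .domStep _ (not_sepyEnd_of_forall_exists_uncolored (by simp))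
    (not_domEnd_of_not_dominates true fun h => by simpa [Pos.colorSet] using h 0)
    ⟨0, true, by simp, 0, mem_closedNbhd_self 0, by simp [Pos.colorSet]⟩ fun w c _ => ?_
  rw [show w = w - 3 + ((3 : ℕ) : Fin (m + 2)) by push_cast; ring]
  exact sepyWins_play_of_path ((injOn_add_natCast _).mono (Set.Iio_subset_Iio hn))
    (fun k _ => closedNbhd_cycleGraph_add_natCast _ k) c
end
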